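/- For integer λ ≥ 0, S_{1,2}(λ) := ∫_{[0,1]³} (y₁+y₂)^{2λ}(y₁+y₃)^{2λ}|y₂−y₃|^{2λ} dy equals (−1)^λ ∑_{I₁₂,I₁₃,I₂₃=−λ}^{λ} (−1)^{I₂₃} C(2λ, λ+I₁₂) C(2λ, λ+I₁₃) C(2λ, λ+I₂₃) · [1/((1+2λ+I₁₂+I₁₃)(1+2λ−I₁₂+I₂₃)(1+2λ−I₁₃−I₂₃))]. -/

import Mathlib

open MeasureTheory Finset

/-! Expand the three factors by the binomial theorem, with summation indices centred at `λ`
(the absolute value disappears because the exponent `2λ` is even). The integrand becomes a signed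
combination of monomials `y₁ᵃ y₂ᵇ y₃ᶜ`, and each of these integrates over the unit cube to
`1 / ((a + 1) (b + 1) (c + 1))`. -/

theorem add_pow_two_mul_eq_sum_Icc {R : Type*} [CommSemiring R] (x y : R) (n : ℕ) :
    (x + y) ^ (2 * n) = ∑ i ∈ Icc (-(n : ℤ)) n,
      ((2 * n).choose ((n : ℤ) + i).toNat : R) * x ^ ((n : ℤ) + i).toNat *
        y ^ ((n : ℤ) - i).toNat := by
  rw [add_pow]
  refine (sum_nbij' (fun i => ((n : ℤ) + i).toNat) (fun m => (m : ℤ) - n)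
    ?_ ?_ ?_ ?_ fun i hi => ?_).symm
  all_goals try (intro i hi; simp only [mem_Icc, mem_range] at hi ⊢; omega)
  rw [mem_Icc] at hi
  rw [show ((n : ℤ) - i).toNat = 2 * n - ((n : ℤ) + i).toNat by omega]
  ring

lemma cast_toNat_add_of_mem_Icc {n : ℕ} {i : ℤ} (hi : i ∈ Icc (-(n : ℤ)) n) :
    ((((n : ℤ) + i).toNat : ℕ) : ℝ) = n + i := by
  rw [mem_Icc] at hi
  exact_mod_cast Int.toNat_of_nonneg (by omega : 0 ≤ (n : ℤ) + i)

lemma cast_toNat_sub_of_mem_Icc {n : ℕ} {i : ℤ} (hi : i ∈ Icc (-(n : ℤ)) n) :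
    ((((n : ℤ) - i).toNat : ℕ) : ℝ) = n - i := by
  rw [mem_Icc] at hi
  exact_mod_cast Int.toNat_of_nonneg (by omega : 0 ≤ (n : ℤ) - i)

lemma neg_one_pow_toNat_sub_of_mem_Icc {n : ℕ} {i : ℤ} (hi : i ∈ Icc (-(n : ℤ)) n) :
    (-1 : ℝ) ^ ((n : ℤ) - i).toNat = (-1) ^ n * (-1) ^ i := by
  rw [mem_Icc] at hi
  rw [← zpow_natCast, Int.toNat_of_nonneg (by omega), zpow_sub₀ (by norm_num), div_eq_mul_inv,
    ← inv_zpow, inv_neg_one, zpow_natCast]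

lemma integral_Icc_zero_one_pow (n : ℕ) : ∫ x in Set.Icc (0 : ℝ) 1, x ^ n = 1 / (n + 1) := by
  rw [integral_Icc_eq_integral_Ioc, ← intervalIntegral.integral_of_le zero_le_one, integral_pow]
  simp

lemma integral_unitCube_monomial (m n p : ℕ) :
    ∫ y in Set.Icc (0 : ℝ) 1 ×ˢ (Set.Icc (0 : ℝ) 1 ×ˢ Set.Icc (0 : ℝ) 1),
      y.1 ^ m * (y.2.1 ^ n * y.2.2 ^ p) = 1 / (m + 1) * (1 / (n + 1) * (1 / (p + 1))) := by
  rw [Measure.volume_eq_prod, setIntegral_prod_mul (fun x : ℝ => x ^ m)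
    (fun z : ℝ × ℝ => z.1 ^ n * z.2 ^ p), Measure.volume_eq_prod,
    setIntegral_prod_mul (fun x : ℝ => x ^ n) (fun x : ℝ => x ^ p)]
  simp only [integral_Icc_zero_one_pow]

lemma integral_sum_sum_sum {α ι κ ν : Type*} [MeasurableSpace α] {μ : Measure α}
    (s : Finset ι) (t : Finset κ) (u : Finset ν) {f : ι → κ → ν → α → ℝ}
    (hf : ∀ i j k, Integrable (f i j k) μ) :
    ∫ x, ∑ i ∈ s, ∑ j ∈ t, ∑ k ∈ u, f i j k x ∂μ =
      ∑ i ∈ s, ∑ j ∈ t, ∑ k ∈ u, ∫ x, f i j k x ∂μ := by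
  rw [integral_finsetSum _ fun i _ => integrable_finsetSum _ fun j _ =>
    integrable_finsetSum _ fun k _ => hf i j k]
  refine sum_congr rfl fun i _ => ?_
  rw [integral_finsetSum _ fun j _ => integrable_finsetSum _ fun k _ => hf i j k]
  exact sum_congr rfl fun j _ => integral_finsetSum _ fun k _ => hf i j k

lemma add_pow_mul_add_pow_mul_abs_sub_pow_eq_sum (n : ℕ) (x y z : ℝ) :
    (x + y) ^ (2 * n) * (x + z) ^ (2 * n) * |y - z| ^ (2 * n) =
      ∑ i ∈ Icc (-(n : ℤ)) n, ∑ j ∈ Icc (-(n : ℤ)) n, ∑ k ∈ Icc (-(n : ℤ)) n,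
        (-1) ^ ((n : ℤ) - k).toNat * ((2 * n).choose ((n : ℤ) + i).toNat *
          (2 * n).choose ((n : ℤ) + j).toNat * (2 * n).choose ((n : ℤ) + k).toNat : ℝ) *
        (x ^ (((n : ℤ) + i).toNat + ((n : ℤ) + j).toNat) *
          (y ^ (((n : ℤ) - i).toNat + ((n : ℤ) + k).toNat) *
            z ^ (((n : ℤ) - j).toNat + ((n : ℤ) - k).toNat))) := by
  rw [(even_two_mul n).pow_abs, sub_eq_add_neg, add_pow_two_mul_eq_sum_Icc x y,
    add_pow_two_mul_eq_sum_Icc x z, add_pow_two_mul_eq_sum_Icc y (-z), sum_mul_sum, sum_mul]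
  simp_rw [sum_mul_sum, neg_pow z]
  refine sum_congr rfl fun i _ => sum_congr rfl fun j _ => sum_congr rfl fun k _ => ?_
  ring

/-- Binomial-sum representation of the joint-moment integral `S_{1,2}(λ)`
for integer `λ`. -/
theorem stmt12 (lam : ℕ) :
    ∫ y in (Set.Icc (0 : ℝ) 1) ×ˢ ((Set.Icc (0 : ℝ) 1) ×ˢ (Set.Icc (0 : ℝ) 1)),
        (y.1 + y.2.1) ^ (2 * lam) * (y.1 + y.2.2) ^ (2 * lam) *
          |y.2.1 - y.2.2| ^ (2 * lam)
      = (-1 : ℝ) ^ lam *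
        ∑ I12 ∈ Finset.Icc (-(lam : ℤ)) lam,
          ∑ I13 ∈ Finset.Icc (-(lam : ℤ)) lam,
            ∑ I23 ∈ Finset.Icc (-(lam : ℤ)) lam,
              (-1 : ℝ) ^ I23 *
                ((2 * lam).choose ((lam : ℤ) + I12).toNat : ℝ) *
                ((2 * lam).choose ((lam : ℤ) + I13).toNat : ℝ) *
                ((2 * lam).choose ((lam : ℤ) + I23).toNat : ℝ) *
                (1 / ((1 + 2 * (lam : ℝ) + (I12 : ℝ) + (I13 : ℝ)) *
                  (1 + 2 * (lam : ℝ) - (I12 : ℝ) + (I23 : ℝ)) *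
                  (1 + 2 * (lam : ℝ) - (I13 : ℝ) - (I23 : ℝ)))) := by
  have hcube : IsCompact (Set.Icc (0 : ℝ) 1 ×ˢ (Set.Icc (0 : ℝ) 1 ×ˢ Set.Icc (0 : ℝ) 1)) :=
    isCompact_Icc.prod (isCompact_Icc.prod isCompact_Icc)
  simp_rw [add_pow_mul_add_pow_mul_abs_sub_pow_eq_sum]
  rw [integral_sum_sum_sum _ _ _ fun i j k =>
    (Continuous.continuousOn (by fun_prop)).integrableOn_compact hcube]
  simp_rw [mul_sum]
  refine sum_congr rfl fun i hi => sum_congr rfl fun j hj => sum_congr rfl fun k hk => ?_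
  rw [integral_const_mul, integral_unitCube_monomial, neg_one_pow_toNat_sub_of_mem_Icc hk]
  push_cast
  rw [cast_toNat_add_of_mem_Icc hi, cast_toNat_add_of_mem_Icc hj, cast_toNat_add_of_mem_Icc hk,
    cast_toNat_sub_of_mem_Icc hi, cast_toNat_sub_of_mem_Icc hj, cast_toNat_sub_of_mem_Icc hk]
  simp only [one_div, mul_inv]
  ring
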